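/- Let H be a complex Hilbert space, A a positive bounded operator, T, S bounded operators admitting A-adjoints. Then w_A(S^♯T)² ≤ (1/2) ‖(T^♯T)² + (S^♯S)²‖_A, where w_A(R) = sup{|⟨Rx,x⟩_A| : ‖x‖_A = 1}. -/

import Mathlib

open scoped InnerProductSpace

variable {H : Type*} [NormedAddCommGroup H] [InnerProductSpace ℂ H] [CompleteSpace H]

/-- The `A`-semi-inner product `⟪x, y⟫_A = ⟪A x, y⟫`. -/
noncomputable def ipA (A : H →L[ℂ] H) (x y : H) : ℂ := ⟪A x, y⟫_ℂ

/-- The `A`-semi-norm `‖x‖_A = √(re ⟪A x, x⟫)`. -/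
noncomputable def nA (A : H →L[ℂ] H) (x : H) : ℝ := Real.sqrt (ipA A x x).re

/-- The `A`-numerical radius. -/
noncomputable def wA (A T : H →L[ℂ] H) : ℝ :=
  sSup {c : ℝ | ∃ x : H, nA A x = 1 ∧ c = ‖ipA A (T x) x‖}

/-- The `A`-operator seminorm. -/
noncomputable def opA (A T : H →L[ℂ] H) : ℝ :=
  sSup {c : ℝ | ∃ x : H, nA A x = 1 ∧ c = nA A (T x)}

/-!
For `‖x‖_A = 1`, Cauchy–Schwarz for the semi-inner product `⟪·, ·⟫_A` gives
`|⟪S^♯T x, x⟫_A|² = |⟪T x, S x⟫_A|² ≤ ‖T x‖_A² ‖S x‖_A²`, and again by Cauchy–Schwarz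
`‖T x‖_A² = ⟪x, T^♯T x⟫_A ≤ ‖T^♯T x‖_A`, likewise for `S`. By AM–GM and the `A`-selfadjointness
of `P = T^♯T` and `Q = S^♯S`, `‖P x‖_A ‖Q x‖_A ≤ ½ ⟪x, (P² + Q²) x⟫_A ≤ ½ ‖P² + Q²‖_A`.

The last step needs the supremum defining `‖P² + Q²‖_A` to be bounded (`sSup` is `0` otherwise):
an `A`-selfadjoint `R` satisfies `‖R x‖_A ^ 2 ^ n ≤ ‖R ^ 2 ^ n x‖_A ≤ √‖A‖ ‖R‖ ^ 2 ^ n ‖x‖`, hence `‖R x‖_A ≤ ‖R‖`.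
-/

theorem le_of_forall_pow_two_pow_le_mul {a b C : ℝ} (hb : 0 ≤ b)
    (h : ∀ n : ℕ, a ^ 2 ^ n ≤ b ^ 2 ^ n * C) : a ≤ b := by
  by_contra! hba
  have ha : 0 < a := hb.trans_lt hba
  have hr : Filter.Tendsto (fun n : ℕ => (b / a) ^ 2 ^ n * C) Filter.atTop (nhds 0) := by
    simpa using ((tendsto_pow_atTop_nhds_zero_of_lt_one (by positivity)
      ((div_lt_one ha).2 hba)).comp (tendsto_pow_atTop_atTop_of_one_lt one_lt_two)).mul_const C
  obtain ⟨n, hn⟩ := (hr.eventually (gt_mem_nhds one_pos)).exists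
  have : 1 ≤ (b / a) ^ 2 ^ n * C := by
    rw [div_pow, div_mul_eq_mul_div, le_div_iff₀ (by positivity), one_mul]
    exact h n
  exact hn.not_ge this

section SemiInnerProduct

omit [CompleteSpace H]

variable {A : H →L[ℂ] H}

theorem conj_ipA (hA : A.IsPositive) (x y : H) : starRingEnd ℂ (ipA A x y) = ipA A y x := by
  rw [ipA, ipA, inner_conj_symm]
  exact (hA.isSymmetric y x).symm

/-- `ipA A` as a semi-inner product, so that Mathlib's Cauchy–Schwarz applies to it. -/
noncomputable abbrev semiInnerCore (hA : A.IsPositive) : PreInnerProductSpace.Core ℂ H where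
  inner := ipA A
  conj_inner_symm x y := conj_ipA hA y x
  re_inner_nonneg x := hA.re_inner_nonneg_left x
  add_left x y z := by simp [ipA]
  smul_left x y r := by simp [ipA, mul_comm]

theorem norm_ipA_le (hA : A.IsPositive) (x y : H) : ‖ipA A x y‖ ≤ nA A x * nA A y :=
  @InnerProductSpace.Core.norm_inner_le_norm ℂ H _ _ _ (semiInnerCore hA) x y

theorem re_ipA_le (hA : A.IsPositive) (x y : H) : (ipA A x y).re ≤ nA A x * nA A y :=
  (Complex.re_le_norm _).trans (norm_ipA_le hA x y)

theorem nA_nonneg (x : H) : 0 ≤ nA A x := Real.sqrt_nonneg _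

theorem nA_sq (hA : A.IsPositive) (x : H) : nA A x ^ 2 = (ipA A x x).re :=
  Real.sq_sqrt (hA.re_inner_nonneg_left x)

theorem nA_le_sqrt_norm_mul_norm (y : H) : nA A y ≤ Real.sqrt ‖A‖ * ‖y‖ := by
  have h : (ipA A y y).re ≤ ‖A‖ * ‖y‖ ^ 2 :=
    calc (ipA A y y).re ≤ ‖A y‖ * ‖y‖ := (Complex.re_le_norm _).trans (norm_inner_le_norm _ _)
      _ ≤ ‖A‖ * ‖y‖ * ‖y‖ := by gcongr; exact A.le_opNorm y
      _ = ‖A‖ * ‖y‖ ^ 2 := by ring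
  calc nA A y ≤ Real.sqrt (‖A‖ * ‖y‖ ^ 2) := Real.sqrt_le_sqrt h
    _ = Real.sqrt ‖A‖ * ‖y‖ := by rw [Real.sqrt_mul (norm_nonneg A), Real.sqrt_sq (norm_nonneg y)]

theorem ipA_adjoint_left (hA : A.IsPositive) {T Ts : H →L[ℂ] H}
    (hadj : ∀ x y, ipA A (T x) y = ipA A x (Ts y)) (x y : H) :
    ipA A (Ts x) y = ipA A x (T y) := by
  rw [← conj_ipA hA y, ← hadj, conj_ipA hA]

theorem nA_apply_sq_le (hA : A.IsPositive) {T Ts : H →L[ℂ] H}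
    (hadj : ∀ x y, ipA A (T x) y = ipA A x (Ts y)) (x : H) :
    nA A (T x) ^ 2 ≤ nA A x * nA A (Ts (T x)) := by
  rw [nA_sq hA, hadj]
  exact re_ipA_le hA _ _

theorem opA_nonneg (Q : H →L[ℂ] H) : 0 ≤ opA A Q :=
  Real.sSup_nonneg <| by rintro _ ⟨x, -, rfl⟩; exact nA_nonneg _

theorem wA_sq_le {R : H →L[ℂ] H} {c : ℝ} (hc : 0 ≤ c)
    (h : ∀ x, nA A x = 1 → ‖ipA A (R x) x‖ ^ 2 ≤ c) : wA A R ^ 2 ≤ c := by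
  have hw : wA A R ≤ Real.sqrt c :=
    Real.sSup_le (by rintro _ ⟨x, hx, rfl⟩; exact Real.le_sqrt_of_sq_le (h x hx)) (Real.sqrt_nonneg c)
  have hw0 : 0 ≤ wA A R := Real.sSup_nonneg <| by rintro _ ⟨x, -, rfl⟩; exact norm_nonneg _
  calc wA A R ^ 2 ≤ Real.sqrt c ^ 2 := by gcongr
    _ = c := Real.sq_sqrt hc

variable (A) in
def IsASelfAdjoint (Q : H →L[ℂ] H) : Prop := ∀ x y, ipA A (Q x) y = ipA A x (Q y)

namespace IsASelfAdjoint

variable {P Q : H →L[ℂ] H}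

theorem adjoint_comp (hA : A.IsPositive) {T Ts : H →L[ℂ] H}
    (hadj : ∀ x y, ipA A (T x) y = ipA A x (Ts y)) : IsASelfAdjoint A (Ts ∘L T) := fun x y => by
  rw [ContinuousLinearMap.comp_apply, ipA_adjoint_left hA hadj, hadj, ContinuousLinearMap.comp_apply]

theorem comp_self (hP : IsASelfAdjoint A P) : IsASelfAdjoint A (P ∘L P) := fun x y => by
  rw [ContinuousLinearMap.comp_apply, hP, hP, ContinuousLinearMap.comp_apply]

theorem add (hP : IsASelfAdjoint A P) (hQ : IsASelfAdjoint A Q) : IsASelfAdjoint A (P + Q) :=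
  fun x y => by
    simp only [ipA, add_apply, map_add, inner_add_left, inner_add_right]
    exact congrArg₂ (· + ·) (hP x y) (hQ x y)

theorem pow_two_pow (hQ : IsASelfAdjoint A Q) (n : ℕ) : IsASelfAdjoint A (Q ^ 2 ^ n) := by
  induction n with
  | zero => simpa using hQ
  | succ n ih => rw [pow_succ, pow_mul, sq]; exact ih.comp_self

theorem nA_apply_sq (hA : A.IsPositive) (hQ : IsASelfAdjoint A Q) (x : H) :
    nA A (Q x) ^ 2 = (ipA A x (Q (Q x))).re := by
  rw [nA_sq hA, hQ]

theorem nA_apply_pow_two_pow_le (hA : A.IsPositive) (hQ : IsASelfAdjoint A Q) {x : H}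
    (hx : nA A x = 1) (n : ℕ) : nA A (Q x) ^ 2 ^ n ≤ nA A ((Q ^ 2 ^ n) x) := by
  induction n with
  | zero => simp
  | succ n ih =>
    calc nA A (Q x) ^ 2 ^ (n + 1) = (nA A (Q x) ^ 2 ^ n) ^ 2 := by rw [pow_succ, pow_mul]
      _ ≤ nA A ((Q ^ 2 ^ n) x) ^ 2 := pow_le_pow_left₀ (pow_nonneg (nA_nonneg _) _) ih 2
      _ ≤ nA A x * nA A ((Q ^ 2 ^ n) ((Q ^ 2 ^ n) x)) := nA_apply_sq_le hA (hQ.pow_two_pow n) x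
      _ = nA A ((Q ^ 2 ^ (n + 1)) x) := by rw [hx, one_mul, pow_succ, pow_mul, sq]; rfl

theorem nA_apply_le_norm (hA : A.IsPositive) (hQ : IsASelfAdjoint A Q) {x : H}
    (hx : nA A x = 1) : nA A (Q x) ≤ ‖Q‖ :=
  le_of_forall_pow_two_pow_le_mul (norm_nonneg Q) fun n =>
    calc nA A (Q x) ^ 2 ^ n ≤ nA A ((Q ^ 2 ^ n) x) := hQ.nA_apply_pow_two_pow_le hA hx n
      _ ≤ Real.sqrt ‖A‖ * (‖Q‖ ^ 2 ^ n * ‖x‖) := by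
        refine (nA_le_sqrt_norm_mul_norm _).trans ?_
        gcongr
        exact ((Q ^ 2 ^ n).le_opNorm x).trans (by gcongr; exact norm_pow_le' Q (by positivity))
      _ = ‖Q‖ ^ 2 ^ n * (Real.sqrt ‖A‖ * ‖x‖) := by ring

theorem re_ipA_apply_le_opA (hA : A.IsPositive) (hQ : IsASelfAdjoint A Q) {x : H}
    (hx : nA A x = 1) : (ipA A x (Q x)).re ≤ opA A Q := by
  have hbdd : BddAbove {c : ℝ | ∃ x : H, nA A x = 1 ∧ c = nA A (Q x)} :=
    ⟨‖Q‖, by rintro _ ⟨x, hx, rfl⟩; exact hQ.nA_apply_le_norm hA hx⟩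
  calc (ipA A x (Q x)).re ≤ nA A (Q x) := by simpa [hx] using re_ipA_le hA x (Q x)
    _ ≤ opA A Q := le_csSup hbdd ⟨x, hx, rfl⟩

end IsASelfAdjoint

theorem norm_ipA_adjoint_comp_sq_le (hA : A.IsPositive) {T Ts S Ss : H →L[ℂ] H}
    (hadjT : ∀ x y, ipA A (T x) y = ipA A x (Ts y))
    (hadjS : ∀ x y, ipA A (S x) y = ipA A x (Ss y)) {x : H} (hx : nA A x = 1) :
    ‖ipA A ((Ss ∘L T) x) x‖ ^ 2 ≤
      (1 / 2) * (ipA A x (((Ts ∘L T) ∘L (Ts ∘L T) + (Ss ∘L S) ∘L (Ss ∘L S)) x)).re := by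
  have hTP : nA A (T x) ^ 2 ≤ nA A (Ts (T x)) := by simpa [hx] using nA_apply_sq_le hA hadjT x
  have hSQ : nA A (S x) ^ 2 ≤ nA A (Ss (S x)) := by simpa [hx] using nA_apply_sq_le hA hadjS x
  have hsum : nA A (Ts (T x)) ^ 2 + nA A (Ss (S x)) ^ 2 =
      (ipA A x (((Ts ∘L T) ∘L (Ts ∘L T) + (Ss ∘L S) ∘L (Ss ∘L S)) x)).re := by
    have hP := (IsASelfAdjoint.adjoint_comp hA hadjT).nA_apply_sq hA x
    have hQ := (IsASelfAdjoint.adjoint_comp hA hadjS).nA_apply_sq hA x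
    simp only [ContinuousLinearMap.comp_apply] at hP hQ
    rw [hP, hQ]
    simp only [ipA, add_apply, ContinuousLinearMap.comp_apply, inner_add_right, Complex.add_re]
  calc ‖ipA A ((Ss ∘L T) x) x‖ ^ 2 = ‖ipA A (T x) (S x)‖ ^ 2 := by
        rw [ContinuousLinearMap.comp_apply, ipA_adjoint_left hA hadjS]
    _ ≤ nA A (T x) ^ 2 * nA A (S x) ^ 2 := by rw [← mul_pow]; gcongr; exact norm_ipA_le hA _ _
    _ ≤ nA A (Ts (T x)) * nA A (Ss (S x)) := by gcongr; exact nA_nonneg _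
    _ ≤ (1 / 2) * (nA A (Ts (T x)) ^ 2 + nA A (Ss (S x)) ^ 2) := by
        nlinarith [two_mul_le_add_sq (nA A (Ts (T x))) (nA A (Ss (S x)))]
    _ = _ := by rw [hsum]

end SemiInnerProduct

theorem stmt16 (A : H →L[ℂ] H) (hA : A.IsPositive) (T Ts S Ss : H →L[ℂ] H)
    (hadjT : ∀ x y : H, ipA A (T x) y = ipA A x (Ts y))
    (hadjS : ∀ x y : H, ipA A (S x) y = ipA A x (Ss y)) :
    wA A (Ss ∘L T) ^ 2 ≤
      (1 / 2) * opA A ((Ts ∘L T) ∘L (Ts ∘L T) + (Ss ∘L S) ∘L (Ss ∘L S)) := by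
  have hR : IsASelfAdjoint A ((Ts ∘L T) ∘L (Ts ∘L T) + (Ss ∘L S) ∘L (Ss ∘L S)) :=
    (IsASelfAdjoint.adjoint_comp hA hadjT).comp_self.add
      (IsASelfAdjoint.adjoint_comp hA hadjS).comp_self
  refine wA_sq_le (mul_nonneg (by norm_num) (opA_nonneg _)) fun x hx => ?_
  calc ‖ipA A ((Ss ∘L T) x) x‖ ^ 2
      ≤ (1 / 2) * (ipA A x (((Ts ∘L T) ∘L (Ts ∘L T) + (Ss ∘L S) ∘L (Ss ∘L S)) x)).re :=
        norm_ipA_adjoint_comp_sq_le hA hadjT hadjS hx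
    _ ≤ _ := by gcongr; exact hR.re_ipA_apply_le_opA hA hx
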